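/- For every natural number N with N ∈ {41, 43, 45, 47} or N ≥ 49, one has (325/65536) · φ(N) · ψ(N) > 8, where φ is Euler's totient function and ψ(N) = N · ∏_{p | N, p prime} (1 + 1/p); equivalently, 325 · φ(N) · ψ(N) > 524288. (This is the arithmetic inequality underlying the proof that X₁(N) is not tetraelliptic over ℚ for these N, via the gonality lower bound Gon(X₁(N)) ≥ (325/65536)·φ(N)·ψ(N).) -/
import Mathlib

lemma prod_Icc_one_sub_inv_sq (N : ℕ) (hN : 1 ≤ N) :
    ∏ k ∈ Finset.Icc 2 N, (1 - 1/(k:ℚ)^2) = ((N:ℚ)+1)/(2*N) := by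
  induction N with
  | zero => omega
  | succ n ih =>
    rcases Nat.eq_or_lt_of_le hN with h | h
    · rw [← h]; norm_num
    · have hn : 1 ≤ n := by omega
      rw [Finset.prod_Icc_succ_top (by omega), ih hn]
      have h0 : ((n:ℚ)+1) ≠ 0 := by positivity
      have h0' : (n:ℚ) ≠ 0 := Nat.cast_ne_zero.2 (by omega)
      push_cast
      field_simp
      ring

lemma gonality_bound_large (N : ℕ) (h : 57 ≤ N) :
    (325 : ℚ) / 65536 * (Nat.totient N) *
      ((N : ℚ) * ∏ p ∈ N.primeFactors, (1 + 1 / (p : ℚ))) > 8 := by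
  have hN0 : N ≠ 0 := by omega
  have hP : N.primeFactors ⊆ Finset.Icc 2 N := by
    intro p hp
    rw [Nat.mem_primeFactors] at hp
    rw [Finset.mem_Icc]
    exact ⟨hp.1.two_le, Nat.le_of_dvd (by omega) hp.2.1⟩
  have hfact : ∀ k : ℕ, 2 ≤ k → 0 ≤ 1 - 1/(k:ℚ)^2 ∧ 1 - 1/(k:ℚ)^2 ≤ 1 := by
    intro k hk
    have h2 : (2:ℚ) ≤ (k:ℚ) := by exact_mod_cast hk
    have hk0 : (0:ℚ) < (k:ℚ)^2 := by positivity
    constructor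
    · have : 1/(k:ℚ)^2 ≤ 1 := by
        rw [div_le_one hk0]; nlinarith
      linarith
    · have : 0 ≤ 1/(k:ℚ)^2 := by positivity
      linarith
  have key : ∏ k ∈ Finset.Icc 2 N, (1 - 1/(k:ℚ)^2) ≤
      ∏ p ∈ N.primeFactors, (1 - 1/(p:ℚ)^2) := by
    rw [← Finset.prod_sdiff hP]
    have h1 : ∏ k ∈ Finset.Icc 2 N \ N.primeFactors, (1 - 1/(k:ℚ)^2) ≤ 1 :=
      Finset.prod_le_one
        (fun k hk => (hfact k (Finset.mem_Icc.1 (Finset.mem_sdiff.1 hk).1).1).1)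
        (fun k hk => (hfact k (Finset.mem_Icc.1 (Finset.mem_sdiff.1 hk).1).1).2)
    have h2 : (0:ℚ) ≤ ∏ p ∈ N.primeFactors, (1 - 1/(p:ℚ)^2) :=
      Finset.prod_nonneg fun p hp =>
        (hfact p (Nat.Prime.two_le (Nat.prime_of_mem_primeFactors hp))).1
    exact mul_le_of_le_one_left h2 h1
  have hQ : (1:ℚ)/2 ≤ ∏ p ∈ N.primeFactors, (1 - 1/(p:ℚ)^2) := by
    refine le_trans ?_ (le_trans (le_of_eq (prod_Icc_one_sub_inv_sq N (by omega)).symm) key)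
    have hNpos : (0:ℚ) < (N:ℚ) := by exact_mod_cast Nat.pos_of_ne_zero hN0
    rw [div_le_div_iff₀ (by norm_num) (by positivity)]
    linarith
  rw [Nat.totient_eq_mul_prod_factors]
  have hprod : (∏ p ∈ N.primeFactors, (1 - (p:ℚ)⁻¹)) *
      (∏ p ∈ N.primeFactors, (1 + 1/(p:ℚ))) = ∏ p ∈ N.primeFactors, (1 - 1/(p:ℚ)^2) := by
    rw [← Finset.prod_mul_distrib]
    exact Finset.prod_congr rfl fun p _ => by ring
  have hre : (325 : ℚ) / 65536 * ((N:ℚ) * ∏ p ∈ N.primeFactors, (1 - (p:ℚ)⁻¹)) *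
      ((N : ℚ) * ∏ p ∈ N.primeFactors, (1 + 1 / (p : ℚ)))
      = (325 : ℚ) / 65536 * (N:ℚ)^2 *
        ((∏ p ∈ N.primeFactors, (1 - (p:ℚ)⁻¹)) *
          (∏ p ∈ N.primeFactors, (1 + 1/(p:ℚ)))) := by ring
  rw [hre, hprod]
  have h57 : (57:ℚ) ≤ (N:ℚ) := by exact_mod_cast h
  nlinarith [mul_le_mul_of_nonneg_left hQ (by positivity : (0:ℚ) ≤ (N:ℚ)^2),
    sq_nonneg ((N:ℚ) - 57)]

/-- For every natural number `N` with `N ∈ {41, 43, 45, 47}` or `N ≥ 49`,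
one has `(325/65536) · φ(N) · ψ(N) > 8`, where `φ` is Euler's totient function and
`ψ(N) = N · ∏_{p | N prime} (1 + 1/p)` is the Dedekind psi function. -/
theorem gonality_bound_inequality (N : ℕ)
    (hN : N = 41 ∨ N = 43 ∨ N = 45 ∨ N = 47 ∨ 49 ≤ N) :
    (325 : ℚ) / 65536 * (Nat.totient N) *
      ((N : ℚ) * ∏ p ∈ N.primeFactors, (1 + 1 / (p : ℚ))) > 8 := by
  have small : ∀ M : ℕ, M = 41 ∨ M = 43 ∨ M = 45 ∨ M = 47 ∨ M = 49 ∨ M = 50 ∨ M = 51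
      ∨ M = 52 ∨ M = 53 ∨ M = 54 ∨ M = 55 ∨ M = 56 →
      (325 : ℚ) / 65536 * (Nat.totient M) *
        ((M : ℚ) * ∏ p ∈ M.primeFactors, (1 + 1 / (p : ℚ))) > 8 := by
    intro M hM
    rcases hM with rfl|rfl|rfl|rfl|rfl|rfl|rfl|rfl|rfl|rfl|rfl|rfl
    · rw [Nat.Prime.primeFactors (by norm_num), show Nat.totient 41 = 40 from by decide]
      norm_num
    · rw [Nat.Prime.primeFactors (by norm_num), show Nat.totient 43 = 42 from by decide]
      norm_num
    · rw [show (45:ℕ) = 3^2*5 by norm_num, Nat.primeFactors_mul (by norm_num) (by norm_num),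
        Nat.primeFactors_prime_pow (by norm_num) (by norm_num),
        Nat.Prime.primeFactors (by norm_num), show Nat.totient (3^2*5) = 24 from by decide]
      norm_num [show ∀ a b : ℕ, ({a} : Finset ℕ) ∪ {b} = {a, b} from fun a b => rfl, Finset.prod_insert, Finset.prod_singleton]
    · rw [Nat.Prime.primeFactors (by norm_num), show Nat.totient 47 = 46 from by decide]
      norm_num
    · rw [show (49:ℕ) = 7^2 by norm_num,
        Nat.primeFactors_prime_pow (by norm_num) (by norm_num),
        show Nat.totient (7^2) = 42 from by decide]
      norm_num
    · rw [show (50:ℕ) = 2*5^2 by norm_num, Nat.primeFactors_mul (by norm_num) (by norm_num),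
        Nat.primeFactors_prime_pow (by norm_num) (by norm_num),
        Nat.Prime.primeFactors (by norm_num), show Nat.totient (2*5^2) = 20 from by decide]
      norm_num [show ∀ a b : ℕ, ({a} : Finset ℕ) ∪ {b} = {a, b} from fun a b => rfl, Finset.prod_insert, Finset.prod_singleton]
    · rw [show (51:ℕ) = 3*17 by norm_num, Nat.primeFactors_mul (by norm_num) (by norm_num),
        Nat.Prime.primeFactors (by norm_num), Nat.Prime.primeFactors (by norm_num),
        show Nat.totient (3*17) = 32 from by decide]
      norm_num [show ∀ a b : ℕ, ({a} : Finset ℕ) ∪ {b} = {a, b} from fun a b => rfl, Finset.prod_insert, Finset.prod_singleton]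
    · rw [show (52:ℕ) = 2^2*13 by norm_num, Nat.primeFactors_mul (by norm_num) (by norm_num),
        Nat.primeFactors_prime_pow (by norm_num) (by norm_num),
        Nat.Prime.primeFactors (by norm_num), show Nat.totient (2^2*13) = 24 from by decide]
      norm_num [show ∀ a b : ℕ, ({a} : Finset ℕ) ∪ {b} = {a, b} from fun a b => rfl, Finset.prod_insert, Finset.prod_singleton]
    · rw [Nat.Prime.primeFactors (by norm_num), show Nat.totient 53 = 52 from by decide]
      norm_num
    · rw [show (54:ℕ) = 2*3^3 by norm_num, Nat.primeFactors_mul (by norm_num) (by norm_num),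
        Nat.primeFactors_prime_pow (by norm_num) (by norm_num),
        Nat.Prime.primeFactors (by norm_num), show Nat.totient (2*3^3) = 18 from by decide]
      norm_num [show ∀ a b : ℕ, ({a} : Finset ℕ) ∪ {b} = {a, b} from fun a b => rfl, Finset.prod_insert, Finset.prod_singleton]
    · rw [show (55:ℕ) = 5*11 by norm_num, Nat.primeFactors_mul (by norm_num) (by norm_num),
        Nat.Prime.primeFactors (by norm_num), Nat.Prime.primeFactors (by norm_num),
        show Nat.totient (5*11) = 40 from by decide]
      norm_num [show ∀ a b : ℕ, ({a} : Finset ℕ) ∪ {b} = {a, b} from fun a b => rfl, Finset.prod_insert, Finset.prod_singleton]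
    · rw [show (56:ℕ) = 2^3*7 by norm_num, Nat.primeFactors_mul (by norm_num) (by norm_num),
        Nat.primeFactors_prime_pow (by norm_num) (by norm_num),
        Nat.Prime.primeFactors (by norm_num), show Nat.totient (2^3*7) = 24 from by decide]
      norm_num [show ∀ a b : ℕ, ({a} : Finset ℕ) ∪ {b} = {a, b} from fun a b => rfl, Finset.prod_insert, Finset.prod_singleton]
  rcases hN with rfl|rfl|rfl|rfl|h49
  · exact small 41 (by norm_num)
  · exact small 43 (by norm_num)
  · exact small 45 (by norm_num)
  · exact small 47 (by norm_num)
  · by_cases h57 : 57 ≤ N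
    · exact gonality_bound_large N h57
    · exact small N (by omega)
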